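/- Let V be a finite-dimensional real vector space, Λ a lattice in V, and let P and Q be integers greater than 1 that are multiplicatively independent. Let f : V → ℝ be a discretely supported function such that f_P(x) = f(Px) − f(x) and f_Q(x) = f(Qx) − f(x) are both Λ-periodic. Let z ∉ ℚΛ be a point such that f_P(P^n z) = 0 for all integers n < 0, and let n(z) ≥ 0 be an integer such that f_P(P^n z) = 0 for all n > n(z). Then ∑_{i=0}^{n(z)} f_P(Pⁱ z) = 0. -/

import Mathlib

/-!
Since `f_P` vanishes along the chain below `z`, `f` is constant on the points `P^n z`, `n ≤ 0`;
these accumulate at `0`, so discreteness of the support gives `f z = 0`. Hence the sum telescopes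
to `c = f(P^{n(z)+1} z)`, which is also the value of `f` at every `P^n z` with `n > n(z)`.
If `c ≠ 0`, the same argument with `Q` in place of `P` shows that below each of these points
there is a point `P^a Q^b z` in the support of `f_Q`. The support of the `Λ`-periodic `f_Q` meets
only finitely many cosets of `Λ`, because `f` is discretely supported and a fundamental domain is
bounded; so two such points with distinct `a` differ by an element of `Λ`. As `z ∉ ℚΛ`, this forces
`P^a Q^b = P^{a'} Q^{b'}`, contradicting multiplicative independence.
-/

open Filter Function

/-- `Λ` is a lattice in the finite-dimensional real vector space `V`:
it is the `ℤ`-span of an `ℝ`-basis of `V`. -/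
def IsLattice (V : Type*) [NormedAddCommGroup V] [NormedSpace ℝ V]
    [FiniteDimensional ℝ V] (Λ : Set V) : Prop :=
  ∃ b : Module.Basis (Fin (Module.finrank ℝ V)) ℝ V,
    Λ = (Submodule.span ℤ (Set.range b) : Submodule ℤ V)

/-- `f` is discretely supported: its support has no accumulation points in `V`. -/
def DiscretelySupported {V : Type*} [NormedAddCommGroup V] {α : Type*} [Zero α]
    (f : V → α) : Prop :=
  ∀ x : V, ¬ AccPt x (𝓟 (Function.support f))

/-- `f` is `Λ`-periodic. -/
def IsPeriodic {V : Type*} [AddCommGroup V] {α : Type*} (Λ : Set V) (f : V → α) : Prop :=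
  ∀ x : V, ∀ l ∈ Λ, f (x + l) = f x

/-- `P` and `Q` are multiplicatively independent: `P ^ a = Q ^ b` with integer exponents
`a, b` implies `a = b = 0`. -/
def MultIndep (P Q : ℤ) : Prop :=
  ∀ a b : ℤ, (P : ℚ) ^ a = (Q : ℚ) ^ b → a = 0 ∧ b = 0

/-- `ℚΛ`: the `ℚ`-span of `Λ` in `V`, i.e. the set of finite `ℚ`-linear combinations of
elements of `Λ`. -/
def ratSpan {V : Type*} [AddCommGroup V] [Module ℝ V] (Λ : Set V) : Set V :=
  {v : V | ∃ (n : ℕ) (c : Fin n → ℚ) (l : Fin n → V),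
    (∀ i, l i ∈ Λ) ∧ v = ∑ i, (c i : ℝ) • l i}

open Topology Bornology Submodule

section DiscreteSupport

variable {V α : Type*} [NormedAddCommGroup V] [Zero α] {f : V → α}

theorem DiscretelySupported.exists_eq_zero_of_tendsto (hf : DiscretelySupported f) {x : V}
    {u : ℕ → V} (hu : Tendsto u atTop (𝓝 x)) (hne : ∀ n, u n ≠ x) : ∃ n, f (u n) = 0 := by
  by_contra! h
  refine hf x (accPt_iff_nhds.2 fun U hU => ?_)
  obtain ⟨n, hn⟩ := (hu.eventually_mem hU).exists
  exact ⟨u n, ⟨hn, h n⟩, hne n⟩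

theorem DiscretelySupported.finite_support_inter [ProperSpace V] (hf : DiscretelySupported f)
    {s : Set V} (hs : IsBounded s) : (support f ∩ s).Finite := by
  by_contra hinf
  obtain ⟨x, -, hx⟩ := Set.Infinite.exists_accPt_of_subset_isCompact hinf hs.isCompact_closure
    (Set.inter_subset_right.trans subset_closure)
  exact hf x (hx.mono (principal_mono.2 Set.inter_subset_left))

end DiscreteSupport

section Chains

variable {V : Type*} [NormedAddCommGroup V] [NormedSpace ℝ V] {f g : V → ℝ} {c : ℝ}

theorem apply_zpow_smul_eq_sub (hc : c ≠ 0) (hg : ∀ x, g x = f (c • x) - f x) (n : ℤ) (y : V) :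
    g (c ^ n • y) = f (c ^ (n + 1) • y) - f (c ^ n • y) := by
  rw [hg, smul_smul, zpow_add_one₀ hc, mul_comm]

theorem sum_range_zpow_smul_eq_sub (hc : c ≠ 0) (hg : ∀ x, g x = f (c • x) - f x) (N : ℕ)
    (y : V) : ∑ i ∈ Finset.range N, g (c ^ (i : ℤ) • y) = f (c ^ (N : ℤ) • y) - f y := by
  rw [Finset.sum_congr rfl fun (i : ℕ) _ => apply_zpow_smul_eq_sub hc hg i y]
  simpa using Finset.sum_range_sub (fun i : ℕ => f (c ^ (i : ℤ) • y)) N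

theorem apply_zpow_smul_eq_of_forall_lt (hc : c ≠ 0) (hg : ∀ x, g x = f (c • x) - f x)
    {y : V} {N : ℤ} (h : ∀ n, N < n → g (c ^ n • y) = 0) {n : ℤ} (hn : N + 1 ≤ n) :
    f (c ^ n • y) = f (c ^ (N + 1) • y) := by
  induction n, hn using Int.leInduction with
  | base => rfl
  | succ n hn ih => rw [← ih, ← sub_eq_zero, ← apply_zpow_smul_eq_sub hc hg, h n (by omega)]

theorem DiscretelySupported.eq_zero_of_forall_neg_zpow (hf : DiscretelySupported f)
    (hc : 1 < |c|) (hg : ∀ x, g x = f (c • x) - f x) {y : V} (hy : y ≠ 0)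
    (h : ∀ n : ℤ, n < 0 → g (c ^ n • y) = 0) : f y = 0 := by
  have hc0 : c ≠ 0 := abs_pos.1 (one_pos.trans hc)
  have hconst : ∀ k : ℕ, f (c ^ (-(k : ℤ)) • y) = f y := by
    intro k
    induction k with
    | zero => simp
    | succ k ih =>
      have hstep := h (-(k + 1 : ℕ)) (by omega)
      rw [apply_zpow_smul_eq_sub hc0 hg, sub_eq_zero] at hstep
      rw [← ih, ← hstep]
      push_cast
      ring_nf
  have hlim : Tendsto (fun k : ℕ => c ^ (-(k : ℤ)) • y) atTop (𝓝 0) := by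
    have := (tendsto_pow_atTop_nhds_zero_of_abs_lt_one
      (by rwa [abs_inv, inv_lt_one₀ (by positivity)] : |c⁻¹| < 1)).smul_const y
    simpa [zpow_neg, ← inv_pow] using this
  obtain ⟨k, hk⟩ := hf.exists_eq_zero_of_tendsto hlim
    fun k => smul_ne_zero (zpow_ne_zero _ hc0) hy
  rwa [hconst] at hk

end Chains

section Lattice

variable {V ι : Type*} [NormedAddCommGroup V] [NormedSpace ℝ V] [FiniteDimensional ℝ V]
  [Fintype ι] (b : Module.Basis ι ℝ V) {f g : V → ℝ} {c : ℝ}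

theorem finite_fract_image_support (hf : DiscretelySupported f) (hc : c ≠ 0)
    (hg : ∀ x, g x = f (c • x) - f x) (hper : IsPeriodic (span ℤ (Set.range b)) g) :
    (ZSpan.fract b '' support g).Finite := by
  have hD := ZSpan.fundamentalDomain_isBounded b
  refine ((hf.finite_support_inter hD).union ((hf.finite_support_inter (hD.smul₀ c)).preimage
    (smul_right_injective V hc).injOn)).subset ?_
  rintro _ ⟨x, hx, rfl⟩
  have hfract : g (ZSpan.fract b x) = g x := by
    rw [← hper (ZSpan.fract b x) _ (ZSpan.floor b x).2, ZSpan.fract_apply, sub_add_cancel]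
  rw [mem_support, ← hfract, hg] at hx
  have hmem := ZSpan.fract_mem_fundamentalDomain b x
  by_cases h0 : f (ZSpan.fract b x) = 0
  · exact Or.inr ⟨fun h => hx (by rw [h, h0, sub_zero]), Set.smul_mem_smul_set hmem⟩
  · exact Or.inl ⟨h0, hmem⟩

theorem exists_ne_sub_mem_span_of_isPeriodic (hf : DiscretelySupported f) (hc : c ≠ 0)
    (hg : ∀ x, g x = f (c • x) - f x) (hper : IsPeriodic (span ℤ (Set.range b)) g)
    {x : ℕ → V} (hx : ∀ k, g (x k) ≠ 0) :
    ∃ k k', k ≠ k' ∧ x k - x k' ∈ span ℤ (Set.range b) := by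
  obtain ⟨k, k', hlt, heq⟩ := Set.Finite.exists_lt_map_eq_of_forall_mem
    (f := fun k => ZSpan.fract b (x k)) (fun k => Set.mem_image_of_mem _ (hx k))
    (finite_fract_image_support b hf hc hg hper)
  refine ⟨k', k, hlt.ne', ?_⟩
  rw [← neg_add_eq_sub]
  exact (ZSpan.fract_eq_fract b _ _).1 heq

end Lattice

theorem mem_ratSpan_of_smul_mem {V : Type*} [AddCommGroup V] [Module ℝ V] {Λ : Set V} {q : ℚ}
    (hq : q ≠ 0) {z : V} (h : (q : ℝ) • z ∈ Λ) : z ∈ ratSpan Λ :=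
  ⟨1, ![q⁻¹], ![(q : ℝ) • z], by simp [h], by simp [smul_smul, hq]⟩

theorem MultIndep.eq_of_zpow_mul_zpow_eq {P Q : ℤ} (h : MultIndep P Q) (hP : P ≠ 0) (hQ : Q ≠ 0)
    {a b a' b' : ℤ} (he : (P : ℚ) ^ a * (Q : ℚ) ^ b = (P : ℚ) ^ a' * (Q : ℚ) ^ b') :
    a = a' ∧ b = b' := by
  have hP' : (P : ℚ) ≠ 0 := by exact_mod_cast hP
  have hQ' : (Q : ℚ) ≠ 0 := by exact_mod_cast hQ
  have key : (P : ℚ) ^ (a - a') = (Q : ℚ) ^ (b' - b) := by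
    rw [zpow_sub₀ hP', zpow_sub₀ hQ', div_eq_div_iff (zpow_ne_zero _ hP') (zpow_ne_zero _ hQ')]
    linear_combination he
  obtain ⟨h1, h2⟩ := h _ _ key
  omega

theorem MultIndep.zpow_mul_zpow_smul_sub_notMem {V : Type*} [AddCommGroup V] [Module ℝ V]
    {Λ : Set V} {P Q : ℤ} (h : MultIndep P Q) (hP : P ≠ 0) (hQ : Q ≠ 0) {z : V}
    (hz : z ∉ ratSpan Λ) {a b a' b' : ℤ} (ha : a ≠ a') :
    ((P : ℝ) ^ a * (Q : ℝ) ^ b) • z - ((P : ℝ) ^ a' * (Q : ℝ) ^ b') • z ∉ Λ := by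
  have hne : (P : ℚ) ^ a * (Q : ℚ) ^ b - (P : ℚ) ^ a' * (Q : ℚ) ^ b' ≠ 0 :=
    sub_ne_zero.2 fun he => ha (h.eq_of_zpow_mul_zpow_eq hP hQ he).1
  exact fun hmem => hz (mem_ratSpan_of_smul_mem hne (by push_cast; rwa [sub_smul]))

theorem chain_vanishing_general
    (V : Type*) [NormedAddCommGroup V] [NormedSpace ℝ V] [FiniteDimensional ℝ V]
    (Λ : Set V) (hΛ : IsLattice V Λ)
    (P Q : ℤ) (hP : 1 < P) (hQ : 1 < Q) (hPQ : MultIndep P Q)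
    (f : V → ℝ) (hf : DiscretelySupported f)
    (fP : V → ℝ) (hfPdef : ∀ x : V, fP x = f ((P : ℝ) • x) - f x)
    (fQ : V → ℝ) (hfQdef : ∀ x : V, fQ x = f ((Q : ℝ) • x) - f x)
    (hfQ : IsPeriodic Λ fQ)
    (z : V) (hz : z ∉ ratSpan Λ)
    (hneg : ∀ n : ℤ, n < 0 → fP (((P : ℝ) ^ n) • z) = 0)
    (nz : ℕ) (hnz : ∀ n : ℤ, (nz : ℤ) < n → fP (((P : ℝ) ^ n) • z) = 0) :
    ∑ i ∈ Finset.range (nz + 1), fP (((P : ℝ) ^ (i : ℤ)) • z) = 0 := by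
  obtain ⟨b, rfl⟩ := hΛ
  have hP1 : 1 < |(P : ℝ)| := by rw [abs_of_pos (by positivity)]; exact_mod_cast hP
  have hQ1 : 1 < |(Q : ℝ)| := by rw [abs_of_pos (by positivity)]; exact_mod_cast hQ
  have hz0 : z ≠ 0 := by rintro rfl; exact hz (mem_ratSpan_of_smul_mem one_ne_zero (by simp))
  have hfz : f z = 0 := hf.eq_zero_of_forall_neg_zpow hP1 hfPdef hz0 hneg
  rw [sum_range_zpow_smul_eq_sub (by positivity) hfPdef, hfz, sub_zero]
  push_cast
  by_contra hc
  have hQchain : ∀ k : ℕ, ∃ m : ℤ, fQ (((P : ℝ) ^ ((nz : ℤ) + 1 + k) * (Q : ℝ) ^ m) • z) ≠ 0 := by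
    intro k
    by_contra! h
    have hfk : f ((P : ℝ) ^ ((nz : ℤ) + 1 + k) • z) = 0 :=
      hf.eq_zero_of_forall_neg_zpow hQ1 hfQdef (smul_ne_zero (by positivity) hz0) fun n _ => by
        rw [smul_smul, mul_comm, h n]
    rw [apply_zpow_smul_eq_of_forall_lt (by positivity) hfPdef hnz (by omega)] at hfk
    exact hc hfk
  choose m hm using hQchain
  obtain ⟨k, k', hkk', hmem⟩ :=
    exists_ne_sub_mem_span_of_isPeriodic b hf (by positivity) hfQdef hfQ hm
  exact hPQ.zpow_mul_zpow_smul_sub_notMem (by omega) (by omega) hz (by omega) hmem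

/-- **Chain vanishing.** If `z ∉ ℚΛ` begins a primitive `P`-chain (i.e. `f_P(P^n z) = 0`
for all `n < 0`) with exponent at most `n(z)` (i.e. `f_P(P^n z) = 0` for all `n > n(z)`),
then `∑_{i=0}^{n(z)} f_P(P^i z) = 0`. -/
theorem chain_vanishing
    (V : Type*) [NormedAddCommGroup V] [NormedSpace ℝ V] [FiniteDimensional ℝ V]
    (Λ : Set V) (hΛ : IsLattice V Λ)
    (P Q : ℤ) (hP : 1 < P) (hQ : 1 < Q) (hPQ : MultIndep P Q)
    (f : V → ℝ) (hf : DiscretelySupported f)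
    (fP : V → ℝ) (hfPdef : ∀ x : V, fP x = f ((P : ℝ) • x) - f x)
    (fQ : V → ℝ) (hfQdef : ∀ x : V, fQ x = f ((Q : ℝ) • x) - f x)
    (hfP : IsPeriodic Λ fP) (hfQ : IsPeriodic Λ fQ)
    (z : V) (hz : z ∉ ratSpan Λ)
    (hneg : ∀ n : ℤ, n < 0 → fP (((P : ℝ) ^ n) • z) = 0)
    (nz : ℕ) (hnz : ∀ n : ℤ, (nz : ℤ) < n → fP (((P : ℝ) ^ n) • z) = 0) :
    ∑ i ∈ Finset.range (nz + 1), fP (((P : ℝ) ^ (i : ℤ)) • z) = 0 :=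
  chain_vanishing_general V Λ hΛ P Q hP hQ hPQ f hf fP hfPdef fQ hfQdef hfQ z hz hneg nz hnz
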